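/- Let F be a doubly-distributive hyperfield. Then 𝓕̄(F) = (S(F); +, ×; ε, K₀) with ε = {-1}, 0 = {0}, 1 = {1}, and K₀ = {A ∈ S(F) : 0 ∈ A} is a fuzzy ring, and the inclusion S(F) ↪ 𝒫*(F) is an injective strong morphism of fuzzy rings 𝓕̄(F) → 𝓕(F) that restricts to a bijection on groups of units, each of which is identified with F^× via x ↦ {x}. -/

import Mathlib

open Set

/-! ### Set-level operations induced by a hyperoperation -/

/-- The sum of two subsets with respect to a hyperaddition. -/
def sAddOf {R : Type*} (add : R → R → Set R) (X Y : Set R) : Set R :=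
  ⋃ x ∈ X, ⋃ y ∈ Y, add x y

/-- The hypersum of a list of elements (padded with a final `zero`). -/
def hypersum {R : Type*} (add : R → R → Set R) (zero : R) (l : List R) : Set R :=
  l.foldr (fun a X => sAddOf add {a} X) {zero}

/-- The collection of all finite (nonempty) hypersums of elements. -/
def sumSet {R : Type*} (add : R → R → Set R) : Set (Set R) :=
  {A | ∃ (a : R) (l : List R), A = l.foldr (fun x X => sAddOf add {x} X) ({a} : Set R)}

/-- The nonempty subsets of a type. -/
abbrev NSet (R : Type*) := {A : Set R // A.Nonempty}

/-- Image of a nonempty subset under a map. -/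
def NSet.map {R S : Type*} (f : R → S) (A : NSet R) : NSet S := ⟨f '' A.1, A.2.image f⟩

/-- Elementwise product of nonempty subsets. -/
def nsMul {R : Type*} (mul : R → R → R) (A B : NSet R) : NSet R :=
  ⟨Set.image2 mul A.1 B.1, A.2.image2 B.2⟩

/-! ### Hyperrings and hyperfields -/

/-- The data `(add, mul, zero, one)` forms a hyperring: `(R, add)` is a canonical
hypergroup, `(R, mul)` is a commutative unital monoid, and multiplication
distributes over hyperaddition with `zero` absorbing. -/
structure IsHyperring {R : Type*} (add : R → R → Set R) (mul : R → R → R)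
    (zero one : R) : Prop where
  add_nonempty : ∀ a b, (add a b).Nonempty
  add_comm : ∀ a b, add a b = add b a
  add_zero : ∀ a, add a zero = {a}
  exists_neg : ∀ a, ∃! b, zero ∈ add a b
  add_assoc : ∀ a b c, sAddOf add (add a b) {c} = sAddOf add {a} (add b c)
  reversible : ∀ a b b' c, zero ∈ add b b' → (a ∈ add b c ↔ c ∈ add a b')
  mul_comm : ∀ a b, mul a b = mul b a
  mul_assoc : ∀ a b c, mul (mul a b) c = mul a (mul b c)
  mul_one : ∀ a, mul a one = a
  mul_zero : ∀ a, mul a zero = zero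
  distrib : ∀ a b c, mul a '' add b c = add (mul a b) (mul a c)

/-- The data forms a hyperfield: a hyperring in which every nonzero element is
a multiplicative unit. -/
structure IsHyperfield {R : Type*} (add : R → R → Set R) (mul : R → R → R)
    (zero one : R) extends IsHyperring add mul zero one : Prop where
  one_ne_zero : one ≠ zero
  inv : ∀ a, a ≠ zero → ∃ b, mul a b = one

/-- A (bundled) hyperring structure on `R`. -/
structure Hyperring (R : Type*) where
  add : R → R → Set R
  mul : R → R → R
  zero : R
  one : R
  isHyperring : IsHyperring add mul zero one

/-- The hyperadditive inverse. -/
noncomputable def Hyperring.neg {R : Type*} (H : Hyperring R) (a : R) : R :=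
  (H.isHyperring.exists_neg a).exists.choose

/-- A unit of a hyperring. -/
def Hyperring.IsUnit {R : Type*} (H : Hyperring R) (a : R) : Prop :=
  ∃ b, H.mul a b = H.one

/-- A (bundled) hyperfield structure on `R`. -/
structure Hyperfield (R : Type*) extends Hyperring R where
  one_ne_zero : one ≠ zero
  inv : ∀ a, a ≠ zero → ∃ b, mul a b = one

/-- A homomorphism of hyperrings (with respect to unbundled data):
`f 0 = 0`, `f 1 = 1`, `f(a+b) ⊆ f a + f b` and `f(a×b) = f a × f b`. -/
structure IsHyperringHom {R S : Type*}
    (addR : R → R → Set R) (mulR : R → R → R) (zeroR oneR : R)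
    (addS : S → S → Set S) (mulS : S → S → S) (zeroS oneS : S)
    (f : R → S) : Prop where
  map_zero : f zeroR = zeroS
  map_one : f oneR = oneS
  map_add : ∀ a b, f '' addR a b ⊆ addS (f a) (f b)
  map_mul : ∀ a b, f (mulR a b) = mulS (f a) (f b)

/-- A strict homomorphism of hyperrings: as above, but `f(a+b) = f a + f b`. -/
structure IsStrictHyperringHom {R S : Type*}
    (addR : R → R → Set R) (mulR : R → R → R) (zeroR oneR : R)
    (addS : S → S → Set S) (mulS : S → S → S) (zeroS oneS : S)
    (f : R → S) : Prop where
  map_zero : f zeroR = zeroS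
  map_one : f oneR = oneS
  map_add : ∀ a b, f '' addR a b = addS (f a) (f b)
  map_mul : ∀ a b, f (mulR a b) = mulS (f a) (f b)

/-! ### Fuzzy rings -/

/-- The data of a fuzzy ring: two binary operations, neutral elements,
a distinguished element `eps` and a set `null` of null elements. -/
structure FuzzyData (K : Type*) where
  add : K → K → K
  mul : K → K → K
  zero : K
  one : K
  eps : K
  null : Set K

namespace FuzzyData

/-- Multiplicative units. -/
def IsUnit {K : Type*} (D : FuzzyData K) (a : K) : Prop := ∃ b, D.mul a b = D.one

/-- Sum of a list of elements. -/
def sum {K : Type*} (D : FuzzyData K) (l : List K) : K := l.foldr D.add D.zero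

/-- A fuzzy ring is field-like if for each pair of units `a, b` there exists
`c ∈ K^× ∪ {0}` with `a + b + c` null. -/
def FieldLike {K : Type*} (D : FuzzyData K) : Prop :=
  ∀ a b, D.IsUnit a → D.IsUnit b →
    ∃ c, (D.IsUnit c ∨ c = D.zero) ∧ D.add (D.add a b) c ∈ D.null

end FuzzyData

/-- Dress's fuzzy ring axioms (FR0)–(FR7). -/
structure IsFuzzyRing {K : Type*} (D : FuzzyData K) : Prop where
  add_comm : ∀ a b, D.add a b = D.add b a
  add_assoc : ∀ a b c, D.add (D.add a b) c = D.add a (D.add b c)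
  add_zero : ∀ a, D.add a D.zero = a
  mul_comm : ∀ a b, D.mul a b = D.mul b a
  mul_assoc : ∀ a b c, D.mul (D.mul a b) c = D.mul a (D.mul b c)
  mul_one : ∀ a, D.mul a D.one = a
  zero_mul : ∀ a, D.mul D.zero a = D.zero
  unit_distrib : ∀ a b c, D.IsUnit a → D.mul a (D.add b c) = D.add (D.mul a b) (D.mul a c)
  eps_sq : D.mul D.eps D.eps = D.one
  null_add : ∀ a ∈ D.null, ∀ b ∈ D.null, D.add a b ∈ D.null
  mul_null : ∀ (a : K), ∀ b ∈ D.null, D.mul a b ∈ D.null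
  zero_mem_null : D.zero ∈ D.null
  one_not_mem_null : D.one ∉ D.null
  fr5 : ∀ a, D.IsUnit a → (D.add D.one a ∈ D.null ↔ a = D.eps)
  fr6 : ∀ a b c d, D.add a b ∈ D.null → D.add c d ∈ D.null →
    D.add (D.mul a c) (D.mul D.eps (D.mul b d)) ∈ D.null
  fr7 : ∀ a b c d, D.add a (D.mul b (D.add c d)) ∈ D.null →
    D.add (D.add a (D.mul b c)) (D.mul b d) ∈ D.null

/-- A weak morphism of fuzzy rings: a map inducing a group homomorphism on units
which preserves null sums of units. -/
structure IsWeakMorphism {K L : Type*} (D : FuzzyData K) (E : FuzzyData L)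
    (f : K → L) : Prop where
  map_unit : ∀ a, D.IsUnit a → E.IsUnit (f a)
  map_one : f D.one = E.one
  map_mul : ∀ a b, D.IsUnit a → D.IsUnit b → f (D.mul a b) = E.mul (f a) (f b)
  map_null : ∀ l : List K, (∀ a ∈ l, D.IsUnit a) →
    D.sum l ∈ D.null → E.sum (l.map f) ∈ E.null

/-- A strong morphism of fuzzy rings. -/
structure IsStrongMorphism {K L : Type*} (D : FuzzyData K) (E : FuzzyData L)
    (f : K → L) : Prop where
  map_one : f D.one = E.one
  map_zero : f D.zero = E.zero
  map_mul : ∀ a b, D.IsUnit a → f (D.mul a b) = E.mul (f a) (f b)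
  map_null : ∀ l : List (K × K),
    D.sum (l.map fun p => D.mul p.1 p.2) ∈ D.null →
    E.sum (l.map fun p => E.mul (f p.1) (f p.2)) ∈ E.null

/-! ### The functor 𝓕 from hyperrings to fuzzy rings -/

/-- The fuzzy-ring data `𝓕(R)` associated to a hyperring `R`: the nonempty
subsets of `R` with subset addition and multiplication, `ε = {-1}`, and null
elements the subsets containing `0`. -/
noncomputable def Hyperring.Fuzzy {R : Type*} (H : Hyperring R) : FuzzyData (NSet R) where
  add A B := ⟨sAddOf H.add A.1 B.1, by
    obtain ⟨a, ha⟩ := A.2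
    obtain ⟨b, hb⟩ := B.2
    obtain ⟨c, hc⟩ := H.isHyperring.add_nonempty a b
    exact ⟨c, Set.mem_biUnion ha (Set.mem_biUnion hb hc)⟩⟩
  mul A B := nsMul H.mul A B
  zero := ⟨{H.zero}, Set.singleton_nonempty _⟩
  one := ⟨{H.one}, Set.singleton_nonempty _⟩
  eps := ⟨{H.neg H.one}, Set.singleton_nonempty _⟩
  null := {A | H.zero ∈ A.1}

/-! ### The functor 𝒢 from field-like fuzzy rings to hyperfields -/

/-- The carrier `K^× ∪ {0}` of `𝒢(K)`. -/
def GCarrier {K : Type*} (D : FuzzyData K) := {a : K // D.IsUnit a ∨ a = D.zero}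

/-- The hyperaddition of `𝒢(K)`: `a ⊕ b = {c : a + b + ε c ∈ K₀}`. -/
def Gadd {K : Type*} (D : FuzzyData K) (a b : GCarrier D) : Set (GCarrier D) :=
  {c | D.add (D.add a.1 b.1) (D.mul D.eps c.1) ∈ D.null}

/-- The zero element of `𝒢(K)`. -/
def Gzero {K : Type*} (D : FuzzyData K) : GCarrier D := ⟨D.zero, Or.inr rfl⟩

/-- The one element of `𝒢(K)`. -/
def Gone {K : Type*} {D : FuzzyData K} (h : IsFuzzyRing D) : GCarrier D :=
  ⟨D.one, Or.inl ⟨D.one, h.mul_one D.one⟩⟩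

/-- The multiplication of `𝒢(K)`. -/
def Gmul {K : Type*} {D : FuzzyData K} (h : IsFuzzyRing D) (a b : GCarrier D) :
    GCarrier D :=
  ⟨D.mul a.1 b.1, by
    rcases b.2 with hb | hb
    · rcases a.2 with ha | ha
      · left
        obtain ⟨a', ha'⟩ := ha
        obtain ⟨b', hb'⟩ := hb
        refine ⟨D.mul a' b', ?_⟩
        rw [h.mul_assoc a.1 b.1 (D.mul a' b'), ← h.mul_assoc b.1 a' b',
          h.mul_comm b.1 a', h.mul_assoc a' b.1 b', hb', h.mul_one, ha']
      · right; rw [ha, h.zero_mul]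
    · right; rw [hb, h.mul_comm, h.zero_mul]⟩

open Classical in
/-- The extension of a weak morphism to `𝒢(K) → 𝒢(L)`, sending `0` to `0`. -/
noncomputable def Gmap {K L : Type*} {D : FuzzyData K} {E : FuzzyData L} {f : K → L}
    (hf : IsWeakMorphism D E f) (a : GCarrier D) : GCarrier E :=
  if h : a.1 = D.zero then Gzero E
  else ⟨f a.1, Or.inl (hf.map_unit a.1 (a.2.resolve_right h))⟩

/-- The canonical map `F → 𝒢(𝓕(F))`, `x ↦ {x}`, for a hyperfield `F`. -/
noncomputable def toG {R : Type*} (F : Hyperfield R) (x : R) :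
    GCarrier F.toHyperring.Fuzzy :=
  ⟨⟨{x}, Set.singleton_nonempty x⟩, by
    by_cases hx : x = F.toHyperring.zero
    · exact Or.inr (by subst hx; rfl)
    · obtain ⟨y, hy⟩ := F.inv x hx
      exact Or.inl ⟨⟨{y}, Set.singleton_nonempty y⟩, by
        apply Subtype.ext
        show Set.image2 F.toHyperring.mul {x} {y} = {F.toHyperring.one}
        rw [Set.image2_singleton, hy]⟩⟩

/-! ### Doubly-distributive hyperfields -/

/-- A hyperfield is doubly-distributive if `(a+b)(c+d) = ac + ad + bc + bd`. -/
def Hyperfield.DoublyDistributive {R : Type*} (F : Hyperfield R) : Prop :=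
  ∀ a b c d : R,
    Set.image2 F.mul (F.add a b) (F.add c d) =
      sAddOf F.add (sAddOf F.add (F.add (F.mul a c) (F.mul a d)) {F.mul b c})
        {F.mul b d}

/-! ### The tropical hyperfield of a totally ordered abelian group, and K_Γ -/

/-- The hyperaddition of the hyperfield `H_Γ` on `Γ ∪ {0}`. -/
def tropAdd (Γ : Type*) [CommGroup Γ] [LinearOrder Γ] [IsOrderedMonoid Γ] (x y : WithZero Γ) :
    Set (WithZero Γ) :=
  if x = y then Set.Iic x else {max x y}

/-- The underlying set of the fuzzy ring `K_Γ`: all singletons and all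
intervals `[0, a]` in `Γ ∪ {0}`. -/
def KgSet (Γ : Type*) [CommGroup Γ] [LinearOrder Γ] [IsOrderedMonoid Γ] : Set (Set (WithZero Γ)) :=
  {A | (∃ a : WithZero Γ, A = {a}) ∨ ∃ a : WithZero Γ, A = Set.Iic a}

open Classical in
/-- The casewise addition of `K_Γ`. -/
noncomputable def KgAdd (Γ : Type*) [CommGroup Γ] [LinearOrder Γ] [IsOrderedMonoid Γ]
    (A B : Set (WithZero Γ)) : Set (WithZero Γ) :=
  if h : ∃ a b : WithZero Γ, A = {a} ∧ B = {b} then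
    if h.choose = h.choose_spec.choose then Set.Iic h.choose
    else {max h.choose h.choose_spec.choose}
  else if h : ∃ a b : WithZero Γ, A = {a} ∧ B = Set.Iic b then
    if h.choose ≤ h.choose_spec.choose then Set.Iic h.choose_spec.choose
    else {h.choose}
  else if h : ∃ a b : WithZero Γ, A = Set.Iic a ∧ B = {b} then
    if h.choose_spec.choose ≤ h.choose then Set.Iic h.choose
    else {h.choose_spec.choose}
  else if h : ∃ a b : WithZero Γ, A = Set.Iic a ∧ B = Set.Iic b then
    Set.Iic (max h.choose h.choose_spec.choose)
  else ∅

/-- The carrier of `K_Γ` as a subtype. -/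
def Kg (Γ : Type*) [CommGroup Γ] [LinearOrder Γ] [IsOrderedMonoid Γ] := {A : Set (WithZero Γ) // A ∈ KgSet Γ}

/-- The inclusion `K_Γ → 𝓕(H_Γ)`. -/
noncomputable def KgToF (Γ : Type*) [CommGroup Γ] [LinearOrder Γ] [IsOrderedMonoid Γ] (A : Kg Γ) : NSet (WithZero Γ) :=
  ⟨A.1, by
    rcases A.2 with ⟨a, h⟩ | ⟨a, h⟩
    · rw [h]; exact Set.singleton_nonempty a
    · rw [h]; exact ⟨a, Set.mem_Iic.2 le_rfl⟩⟩

/-! ### Grassmann–Plücker functions -/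

/-- A Grassmann–Plücker function of rank `r+1` on `E` with coefficients in a
hyperfield `F`. -/
noncomputable def IsGPHyper {R E : Type*} [Fintype E] (F : Hyperfield R) (r : ℕ)
    (φ : (Fin (r + 1) → E) → R) : Prop :=
  (∃ x, φ x ≠ F.zero) ∧
  (∀ x : Fin (r + 1) → E, ∀ i j : Fin (r + 1), i ≠ j → x i = x j → φ x = F.zero) ∧
  (∀ (x : Fin (r + 1) → E) (σ : Equiv.Perm (Fin (r + 1))), Equiv.Perm.sign σ = -1 →
    φ (x ∘ σ) = F.toHyperring.neg (φ x)) ∧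
  (∀ (x : Fin (r + 2) → E) (y : Fin r → E),
    F.zero ∈ hypersum F.add F.zero
      ((List.finRange (r + 2)).map fun (k : Fin (r + 2)) =>
        if Even (k : ℕ)
        then F.toHyperring.neg (F.mul (φ (x ∘ k.succAbove)) (φ (Fin.cons (x k) y)))
        else F.mul (φ (x ∘ k.succAbove)) (φ (Fin.cons (x k) y))))

/-- A Grassmann–Plücker function of rank `r+1` on `E` with coefficients in a
fuzzy ring (given by its data `D`). -/
def IsGPFuzzy {K E : Type*} [Fintype E] (D : FuzzyData K) (r : ℕ)
    (φ : (Fin (r + 1) → E) → K) : Prop :=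
  (∀ x, D.IsUnit (φ x) ∨ φ x = D.zero) ∧
  (∃ x, φ x ≠ D.zero) ∧
  (∀ x : Fin (r + 1) → E, ∀ i j : Fin (r + 1), i ≠ j → x i = x j → φ x = D.zero) ∧
  (∀ (x : Fin (r + 1) → E) (σ : Equiv.Perm (Fin (r + 1))), Equiv.Perm.sign σ = -1 →
    φ (x ∘ σ) = D.mul D.eps (φ x)) ∧
  (∀ (x : Fin (r + 2) → E) (y : Fin r → E),
    D.sum ((List.finRange (r + 2)).map fun (k : Fin (r + 2)) =>
      if Even (k : ℕ)
      then D.mul D.eps (D.mul (φ (x ∘ k.succAbove)) (φ (Fin.cons (x k) y)))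
      else D.mul (φ (x ∘ k.succAbove)) (φ (Fin.cons (x k) y))) ∈ D.null)

/-! Double distributivity is what makes multiplication by a hypersum distribute over
hyperaddition: for a hypersum `x + P` one has
`(x + P)(c + d) = ⋃_{t ∈ P} (x + t)(c + d) = xc + xd + P(c + d)`, and induction on the length
of the hypersum gives `A(c + d) = Ac + Ad`, hence `A(B + C) = AB + AC`. This yields closure of
`S(F)` under products as well as (FR2) and (FR7). A unit of `S(F)` is a singleton `{x}` with
`x ≠ 0`, and (FR5), (FR6) come down to the uniqueness of hyperadditive inverses:
`0 ∈ a + b` forces `b = -a`. -/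

section SetOperations

variable {R : Type*} {add : R → R → Set R}

theorem mem_sAddOf {X Y : Set R} {z : R} :
    z ∈ sAddOf add X Y ↔ ∃ x ∈ X, ∃ y ∈ Y, z ∈ add x y := by
  simp [sAddOf]

theorem sAddOf_singleton_singleton (a b : R) : sAddOf add {a} {b} = add a b := by
  simp [sAddOf]

theorem sAddOf_singleton_left (x : R) (Y : Set R) : sAddOf add {x} Y = ⋃ y ∈ Y, add x y := by
  simp [sAddOf]

theorem sAddOf_iUnion₂_right {ι : Type*} (s : Set ι) (X : Set R) (Y : ι → Set R) :
    sAddOf add X (⋃ i ∈ s, Y i) = ⋃ i ∈ s, sAddOf add X (Y i) := by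
  ext
  simp only [mem_sAddOf, Set.mem_iUnion]
  tauto

theorem sAddOf_iUnion₂_iUnion₂ {ι κ : Type*} (s : Set ι) (t : Set κ) (X : ι → Set R)
    (Y : κ → Set R) :
    sAddOf add (⋃ i ∈ s, X i) (⋃ j ∈ t, Y j) =
      ⋃ i ∈ s, ⋃ j ∈ t, sAddOf add (X i) (Y j) := by
  ext
  simp only [mem_sAddOf, Set.mem_iUnion]
  tauto

theorem singleton_mem_sumSet (a : R) : {a} ∈ sumSet add := ⟨a, [], rfl⟩

theorem sAddOf_singleton_mem_sumSet (x : R) {P : Set R} (hP : P ∈ sumSet add) :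
    sAddOf add {x} P ∈ sumSet add := by
  obtain ⟨a, l, rfl⟩ := hP
  exact ⟨a, x :: l, rfl⟩

@[elab_as_elim]
theorem sumSet_induction {motive : (A : Set R) → A ∈ sumSet add → Prop}
    (singleton : ∀ a, motive {a} (singleton_mem_sumSet a))
    (cons : ∀ x P (hP : P ∈ sumSet add), motive P hP →
      motive (sAddOf add {x} P) (sAddOf_singleton_mem_sumSet x hP))
    {A : Set R} (hA : A ∈ sumSet add) : motive A hA := by
  obtain ⟨a, l, rfl⟩ := hA
  induction l with
  | nil => exact singleton a
  | cons x l ih => exact cons x _ ⟨a, l, rfl⟩ ih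

end SetOperations

namespace Hyperring

variable {R : Type*} (H : Hyperring R)

local infixl:65 " +ₛ " => sAddOf H.add
local infixl:70 " *ₛ " => Set.image2 H.mul

theorem sAddOf_comm (X Y : Set R) : X +ₛ Y = Y +ₛ X := by
  ext
  simp only [mem_sAddOf]
  constructor <;> rintro ⟨x, hx, y, hy, h⟩ <;>
    exact ⟨y, hy, x, hx, H.isHyperring.add_comm x y ▸ h⟩

theorem sAddOf_assoc (X Y Z : Set R) : X +ₛ Y +ₛ Z = X +ₛ (Y +ₛ Z) := by
  ext w
  have assoc (x y z : R) :
      (∃ s ∈ H.add x y, w ∈ H.add s z) ↔ ∃ t ∈ H.add y z, w ∈ H.add x t := by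
    simpa [mem_sAddOf] using Set.ext_iff.1 (H.isHyperring.add_assoc x y z) w
  simp only [mem_sAddOf]
  constructor
  · rintro ⟨s, ⟨x, hx, y, hy, hs⟩, z, hz, hw⟩
    obtain ⟨t, ht, hw⟩ := (assoc x y z).1 ⟨s, hs, hw⟩
    exact ⟨x, hx, t, ⟨y, hy, z, hz, ht⟩, hw⟩
  · rintro ⟨x, hx, t, ⟨y, hy, z, hz, ht⟩, hw⟩
    obtain ⟨s, hs, hw⟩ := (assoc x y z).2 ⟨t, ht, hw⟩
    exact ⟨s, ⟨x, hx, y, hy, hs⟩, z, hz, hw⟩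

theorem sAddOf_zero (X : Set R) : X +ₛ {H.zero} = X := by
  simp [sAddOf, H.isHyperring.add_zero]

theorem sAddOf_sAddOf_sAddOf_comm (W X Y Z : Set R) :
    W +ₛ X +ₛ (Y +ₛ Z) = W +ₛ Y +ₛ (X +ₛ Z) := by
  rw [sAddOf_assoc, ← H.sAddOf_assoc X, H.sAddOf_comm X Y, H.sAddOf_assoc Y, ← sAddOf_assoc]

theorem image_mul_right_add (a b c : R) :
    (H.mul · c) '' H.add a b = H.add (H.mul a c) (H.mul b c) := by
  simp only [H.isHyperring.mul_comm _ c, H.isHyperring.distrib]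

theorem image2_sAddOf_singleton (X Y : Set R) (c : R) :
    (X +ₛ Y) *ₛ {c} = X *ₛ {c} +ₛ Y *ₛ {c} := by
  simp only [Set.image2_singleton_right, sAddOf, Set.image_iUnion₂, Set.biUnion_image,
    image_mul_right_add]

theorem image2_singleton_zero_left {X : Set R} (hX : X.Nonempty) : {H.zero} *ₛ X = {H.zero} := by
  simp only [Set.image2_singleton_left, H.isHyperring.mul_comm H.zero, H.isHyperring.mul_zero,
    hX.image_const]

theorem zero_mem_sAddOf {X Y : Set R} (hX : H.zero ∈ X) (hY : H.zero ∈ Y) :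
    H.zero ∈ X +ₛ Y :=
  mem_sAddOf.2 ⟨_, hX, _, hY, by simp [H.isHyperring.add_zero]⟩

theorem zero_mem_image2 {X Y : Set R} (hX : X.Nonempty) (hY : H.zero ∈ Y) :
    H.zero ∈ X *ₛ Y := by
  obtain ⟨x, hx⟩ := hX
  exact H.isHyperring.mul_zero x ▸ Set.mem_image2_of_mem hx hY

theorem zero_mem_add_neg (a : R) : H.zero ∈ H.add a (H.neg a) :=
  (H.isHyperring.exists_neg a).exists.choose_spec

theorem zero_mem_add_iff_eq_neg {a b : R} : H.zero ∈ H.add a b ↔ b = H.neg a := by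
  obtain ⟨_, -, hunique⟩ := H.isHyperring.exists_neg a
  exact ⟨fun h => (hunique b h).trans (hunique _ (H.zero_mem_add_neg a)).symm,
    fun h => h ▸ H.zero_mem_add_neg a⟩

theorem neg_neg (a : R) : H.neg (H.neg a) = a := by
  rw [eq_comm, ← zero_mem_add_iff_eq_neg, H.isHyperring.add_comm]
  exact H.zero_mem_add_neg a

theorem mul_neg (a b : R) : H.mul a (H.neg b) = H.neg (H.mul a b) := by
  rw [← zero_mem_add_iff_eq_neg, ← H.isHyperring.distrib, ← H.isHyperring.mul_zero a]
  exact Set.mem_image_of_mem _ (H.zero_mem_add_neg b)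

theorem neg_one_mul (a : R) : H.mul (H.neg H.one) a = H.neg a := by
  rw [H.isHyperring.mul_comm, mul_neg, H.isHyperring.mul_one]

theorem neg_one_mul_neg_one : H.mul (H.neg H.one) (H.neg H.one) = H.one := by
  rw [neg_one_mul, neg_neg]

theorem neg_one_mul_neg_mul_neg (a c : R) :
    H.mul (H.neg H.one) (H.mul (H.neg a) (H.neg c)) = H.neg (H.mul a c) := by
  rw [neg_one_mul, mul_neg, neg_neg, H.isHyperring.mul_comm, mul_neg, H.isHyperring.mul_comm c]

theorem zero_mem_sAddOf_image2_of_zero_mem_sAddOf {A B C D : Set R}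
    (hAB : H.zero ∈ A +ₛ B) (hCD : H.zero ∈ C +ₛ D) :
    H.zero ∈ A *ₛ C +ₛ {H.neg H.one} *ₛ (B *ₛ D) := by
  obtain ⟨a, ha, b, hb, hab⟩ := mem_sAddOf.1 hAB
  obtain ⟨c, hc, d, hd, hcd⟩ := mem_sAddOf.1 hCD
  rw [zero_mem_add_iff_eq_neg] at hab hcd
  subst hab hcd
  refine mem_sAddOf.2 ⟨_, Set.mem_image2_of_mem ha hc, _,
    Set.mem_image2_of_mem rfl (Set.mem_image2_of_mem hb hd), ?_⟩
  rw [neg_one_mul_neg_mul_neg]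
  exact H.zero_mem_add_neg _

theorem nonempty_of_mem_sumSet {A : Set R} (hA : A ∈ sumSet H.add) : A.Nonempty := by
  induction hA using sumSet_induction with
  | singleton a => exact Set.singleton_nonempty a
  | cons x P _ ih =>
    obtain ⟨y, hy⟩ := ih
    obtain ⟨z, hz⟩ := H.isHyperring.add_nonempty x y
    exact ⟨z, mem_sAddOf.2 ⟨x, rfl, y, hy, hz⟩⟩

theorem sAddOf_mem_sumSet {A B : Set R} (hA : A ∈ sumSet H.add) (hB : B ∈ sumSet H.add) :
    A +ₛ B ∈ sumSet H.add := by
  induction hA using sumSet_induction with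
  | singleton a => exact sAddOf_singleton_mem_sumSet a hB
  | cons x P _ ih => exact H.sAddOf_assoc {x} P B ▸ sAddOf_singleton_mem_sumSet x ih

theorem image2_singleton_mem_sumSet {A : Set R} (hA : A ∈ sumSet H.add) (b : R) :
    A *ₛ {b} ∈ sumSet H.add := by
  induction hA using sumSet_induction with
  | singleton a => exact Set.image2_singleton ▸ singleton_mem_sumSet _
  | cons x P _ ih =>
    rw [image2_sAddOf_singleton, Set.image2_singleton]
    exact sAddOf_singleton_mem_sumSet _ ih

end Hyperring

namespace Hyperfield

variable {R : Type*} (F : Hyperfield R)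

local infixl:65 " +ₛ " => sAddOf F.add
local infixl:70 " *ₛ " => Set.image2 F.mul

theorem eq_of_mul_eq_one {a a' b : R} (h : F.mul a b = F.one) (h' : F.mul a' b = F.one) :
    a = a' := by
  rw [← F.isHyperring.mul_one a, ← h', F.isHyperring.mul_comm a', ← F.isHyperring.mul_assoc,
    h, F.isHyperring.mul_comm, F.isHyperring.mul_one]

theorem exists_eq_singleton_of_image2_eq_one {A B : Set R} (hA : A.Nonempty) (hB : B.Nonempty)
    (h : A *ₛ B = {F.one}) : ∃ x, x ≠ F.zero ∧ A = {x} := by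
  obtain ⟨b, hb⟩ := hB
  have mul_b {a : R} (ha : a ∈ A) : F.mul a b = F.one :=
    Set.mem_singleton_iff.1 (h ▸ Set.mem_image2_of_mem ha hb)
  obtain ⟨x, hx⟩ := hA
  refine ⟨x, fun hx0 => F.one_ne_zero ?_, ?_⟩
  · rw [← mul_b hx, hx0, F.isHyperring.mul_comm, F.isHyperring.mul_zero]
  · exact Set.eq_singleton_iff_unique_mem.2
      ⟨hx, fun a ha => F.eq_of_mul_eq_one (mul_b ha) (mul_b hx)⟩

theorem exists_singleton_image2_eq_one {x : R} (hx : x ≠ F.zero) :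
    ∃ y, {x} *ₛ {y} = {F.one} := by
  obtain ⟨y, hy⟩ := F.inv x hx
  exact ⟨y, by rw [Set.image2_singleton, hy]⟩

theorem exists_image2_eq_one_iff {A : Set R} (hA : A.Nonempty) :
    (∃ B, B.Nonempty ∧ A *ₛ B = {F.one}) ↔ ∃ x, x ≠ F.zero ∧ A = {x} := by
  refine ⟨fun ⟨B, hB, h⟩ => F.exists_eq_singleton_of_image2_eq_one hA hB h, ?_⟩
  rintro ⟨x, hx, rfl⟩
  obtain ⟨y, hy⟩ := F.exists_singleton_image2_eq_one hx
  exact ⟨{y}, Set.singleton_nonempty y, hy⟩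

theorem exists_mem_sumSet_image2_eq_one_iff {A : Set R} (hA : A ∈ sumSet F.add) :
    (∃ B ∈ sumSet F.add, A *ₛ B = {F.one}) ↔ ∃ x, x ≠ F.zero ∧ A = {x} := by
  refine ⟨fun ⟨B, hB, h⟩ => F.exists_eq_singleton_of_image2_eq_one
    (F.nonempty_of_mem_sumSet hA) (F.nonempty_of_mem_sumSet hB) h, ?_⟩
  rintro ⟨x, hx, rfl⟩
  obtain ⟨y, hy⟩ := F.exists_singleton_image2_eq_one hx
  exact ⟨{y}, singleton_mem_sumSet y, hy⟩

theorem zero_mem_one_sAddOf_iff {A : Set R} (hA : A ∈ sumSet F.add)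
    (hunit : ∃ B ∈ sumSet F.add, A *ₛ B = {F.one}) :
    F.zero ∈ {F.one} +ₛ A ↔ A = {F.neg F.one} := by
  obtain ⟨x, -, rfl⟩ := (F.exists_mem_sumSet_image2_eq_one_iff hA).1 hunit
  rw [sAddOf_singleton_singleton, F.zero_mem_add_iff_eq_neg, Set.singleton_eq_singleton_iff]

namespace DoublyDistributive

variable {F}

theorem image2_add_of_mem_sumSet (hdd : F.DoublyDistributive) {A : Set R}
    (hA : A ∈ sumSet F.add) (c d : R) : A *ₛ F.add c d = A *ₛ {c} +ₛ A *ₛ {d} := by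
  induction hA using sumSet_induction with
  | singleton a =>
    rw [Set.image2_singleton_left, F.isHyperring.distrib, Set.image2_singleton,
      Set.image2_singleton, sAddOf_singleton_singleton]
  | cons x P _ ih =>
    calc ({x} +ₛ P) *ₛ F.add c d
        = ⋃ t ∈ P, F.add x t *ₛ F.add c d := by
          rw [sAddOf_singleton_left, Set.image2_iUnion₂_left]
      _ = ⋃ t ∈ P, F.add (F.mul x c) (F.mul x d) +ₛ F.mul t '' F.add c d := by
          refine Set.iUnion₂_congr fun t _ => ?_
          rw [hdd, F.sAddOf_assoc, sAddOf_singleton_singleton, F.isHyperring.distrib]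
      _ = F.add (F.mul x c) (F.mul x d) +ₛ P *ₛ F.add c d := by
          rw [← sAddOf_iUnion₂_right, Set.iUnion_image_left]
      _ = ({F.mul x c} +ₛ P *ₛ {c}) +ₛ ({F.mul x d} +ₛ P *ₛ {d}) := by
          rw [ih, ← sAddOf_singleton_singleton (add := F.add), F.sAddOf_sAddOf_sAddOf_comm]
      _ = ({x} +ₛ P) *ₛ {c} +ₛ ({x} +ₛ P) *ₛ {d} := by
          rw [F.image2_sAddOf_singleton, F.image2_sAddOf_singleton, Set.image2_singleton,
            Set.image2_singleton]

theorem image2_sAddOf_of_mem_sumSet (hdd : F.DoublyDistributive) {A : Set R}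
    (hA : A ∈ sumSet F.add) (B C : Set R) : A *ₛ (B +ₛ C) = A *ₛ B +ₛ A *ₛ C :=
  calc A *ₛ (B +ₛ C) = ⋃ b ∈ B, ⋃ c ∈ C, A *ₛ F.add b c := by
        simp only [sAddOf, Set.image2_iUnion₂_right]
    _ = ⋃ b ∈ B, ⋃ c ∈ C, A *ₛ {b} +ₛ A *ₛ {c} := by
        simp only [hdd.image2_add_of_mem_sumSet hA]
    _ = A *ₛ B +ₛ A *ₛ C := by
        simp only [← sAddOf_iUnion₂_iUnion₂, Set.image2_singleton_right,
          Set.iUnion_image_right]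

theorem image2_mem_sumSet (hdd : F.DoublyDistributive) {A B : Set R}
    (hA : A ∈ sumSet F.add) (hB : B ∈ sumSet F.add) : A *ₛ B ∈ sumSet F.add := by
  induction hB using sumSet_induction with
  | singleton b => exact F.image2_singleton_mem_sumSet hA b
  | cons y Q _ ih =>
    rw [hdd.image2_sAddOf_of_mem_sumSet hA]
    exact F.sAddOf_mem_sumSet (F.image2_singleton_mem_sumSet hA y) ih

end DoublyDistributive

end Hyperfield

/-- For a doubly-distributive hyperfield `F`, the set `S(F)` of
finite hypersums, with subset addition and multiplication, `ε = {-1}`, `0 = {0}`,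
`1 = {1}` and null elements the members containing `0`, is a fuzzy ring `𝓕̄(F)`
(all axioms (FR0)–(FR7) hold within `S(F)`), and the inclusion `S(F) ↪ 𝒫*(F)` is an
injective strong morphism `𝓕̄(F) → 𝓕(F)` restricting to a bijection on units, each
group of units being identified with `F^×` via `x ↦ {x}`. -/
theorem reduced_fuzzy_isFuzzyRing {R : Type*} (F : Hyperfield R)
    (hdd : F.DoublyDistributive) :
    -- S(F) consists of nonempty subsets (so it embeds into 𝓕(F))
    (∀ A ∈ sumSet F.add, A.Nonempty) ∧
    -- closure under the operations
    (∀ A ∈ sumSet F.add, ∀ B ∈ sumSet F.add, sAddOf F.add A B ∈ sumSet F.add) ∧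
    (∀ A ∈ sumSet F.add, ∀ B ∈ sumSet F.add, Set.image2 F.mul A B ∈ sumSet F.add) ∧
    ({F.zero} ∈ sumSet F.add) ∧ ({F.one} ∈ sumSet F.add) ∧
    ({F.toHyperring.neg F.one} ∈ sumSet F.add) ∧
    -- (FR0): commutative monoid axioms
    (∀ A ∈ sumSet F.add, ∀ B ∈ sumSet F.add, sAddOf F.add A B = sAddOf F.add B A) ∧
    (∀ A ∈ sumSet F.add, ∀ B ∈ sumSet F.add, ∀ C ∈ sumSet F.add,
      sAddOf F.add (sAddOf F.add A B) C = sAddOf F.add A (sAddOf F.add B C)) ∧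
    (∀ A ∈ sumSet F.add, sAddOf F.add A {F.zero} = A) ∧
    (∀ A ∈ sumSet F.add, ∀ B ∈ sumSet F.add,
      Set.image2 F.mul A B = Set.image2 F.mul B A) ∧
    (∀ A ∈ sumSet F.add, ∀ B ∈ sumSet F.add, ∀ C ∈ sumSet F.add,
      Set.image2 F.mul (Set.image2 F.mul A B) C
        = Set.image2 F.mul A (Set.image2 F.mul B C)) ∧
    (∀ A ∈ sumSet F.add, Set.image2 F.mul A {F.one} = A) ∧
    -- (FR1): 0 is absorbing
    (∀ A ∈ sumSet F.add, Set.image2 F.mul {F.zero} A = {F.zero}) ∧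
    -- (FR2): units distribute over addition
    (∀ A ∈ sumSet F.add, ∀ B ∈ sumSet F.add, ∀ C ∈ sumSet F.add,
      (∃ A' ∈ sumSet F.add, Set.image2 F.mul A A' = {F.one}) →
      Set.image2 F.mul A (sAddOf F.add B C)
        = sAddOf F.add (Set.image2 F.mul A B) (Set.image2 F.mul A C)) ∧
    -- (FR3): ε² = 1
    (Set.image2 F.mul {F.toHyperring.neg F.one} {F.toHyperring.neg F.one}
      = ({F.one} : Set R)) ∧
    -- (FR4): null elements form a proper ideal
    (∀ A ∈ sumSet F.add, ∀ B ∈ sumSet F.add,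
      F.zero ∈ A → F.zero ∈ B → F.zero ∈ sAddOf F.add A B) ∧
    (∀ A ∈ sumSet F.add, ∀ B ∈ sumSet F.add,
      F.zero ∈ B → F.zero ∈ Set.image2 F.mul A B) ∧
    (F.zero ∉ ({F.one} : Set R)) ∧
    -- (FR5)
    (∀ A ∈ sumSet F.add, (∃ A' ∈ sumSet F.add, Set.image2 F.mul A A' = {F.one}) →
      (F.zero ∈ sAddOf F.add {F.one} A ↔ A = {F.toHyperring.neg F.one})) ∧
    -- (FR6)
    (∀ A ∈ sumSet F.add, ∀ B ∈ sumSet F.add, ∀ C ∈ sumSet F.add, ∀ D ∈ sumSet F.add,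
      F.zero ∈ sAddOf F.add A B → F.zero ∈ sAddOf F.add C D →
      F.zero ∈ sAddOf F.add (Set.image2 F.mul A C)
        (Set.image2 F.mul {F.toHyperring.neg F.one} (Set.image2 F.mul B D))) ∧
    -- (FR7)
    (∀ A ∈ sumSet F.add, ∀ B ∈ sumSet F.add, ∀ C ∈ sumSet F.add, ∀ D ∈ sumSet F.add,
      F.zero ∈ sAddOf F.add A (Set.image2 F.mul B (sAddOf F.add C D)) →
      F.zero ∈ sAddOf F.add (sAddOf F.add A (Set.image2 F.mul B C))
        (Set.image2 F.mul B D)) ∧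
    -- the inclusion 𝓕̄(F) ↪ 𝓕(F) restricts to a bijection on units, and the units
    -- of both fuzzy rings are identified with F^× via x ↦ {x}
    (∀ A ∈ sumSet F.add,
      ((∃ B ∈ sumSet F.add, Set.image2 F.mul A B = {F.one}) ↔
        (∃ B : Set R, B.Nonempty ∧ Set.image2 F.mul A B = {F.one}))) ∧
    (∀ A ∈ sumSet F.add,
      ((∃ B ∈ sumSet F.add, Set.image2 F.mul A B = {F.one}) ↔
        ∃ x : R, x ≠ F.zero ∧ A = {x})) := by
  have nonempty {A : Set R} (hA : A ∈ sumSet F.add) : A.Nonempty := F.nonempty_of_mem_sumSet hA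
  refine ⟨fun A hA => nonempty hA,
    fun A hA B hB => F.sAddOf_mem_sumSet hA hB,
    fun A hA B hB => hdd.image2_mem_sumSet hA hB,
    singleton_mem_sumSet _, singleton_mem_sumSet _, singleton_mem_sumSet _,
    fun A _ B _ => F.sAddOf_comm A B,
    fun A _ B _ C _ => F.sAddOf_assoc A B C,
    fun A _ => F.sAddOf_zero A,
    fun A _ B _ => Set.image2_comm F.isHyperring.mul_comm,
    fun A _ B _ C _ => Set.image2_assoc F.isHyperring.mul_assoc,
    fun A _ => by simp [Set.image2_singleton_right, F.isHyperring.mul_one],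
    fun A hA => F.image2_singleton_zero_left (nonempty hA),
    fun A hA B _ C _ _ => hdd.image2_sAddOf_of_mem_sumSet hA B C,
    by rw [Set.image2_singleton, F.neg_one_mul_neg_one],
    fun A _ B _ => F.zero_mem_sAddOf,
    fun A hA B _ => F.zero_mem_image2 (nonempty hA),
    fun h => F.one_ne_zero (Set.mem_singleton_iff.1 h).symm,
    fun A hA => F.zero_mem_one_sAddOf_iff hA,
    fun A _ B _ C _ D _ => F.zero_mem_sAddOf_image2_of_zero_mem_sAddOf,
    fun A _ B hB C _ D _ h => by
      rwa [hdd.image2_sAddOf_of_mem_sumSet hB, ← F.sAddOf_assoc] at h,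
    fun A hA => (F.exists_mem_sumSet_image2_eq_one_iff hA).trans
      (F.exists_image2_eq_one_iff (nonempty hA)).symm,
    fun A hA => F.exists_mem_sumSet_image2_eq_one_iff hA⟩
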